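/- arXiv:2011.00280 — 6 statements merged into one kernel-verified Lean document; each statement's English description precedes it below -/
import Mathlib

section
/- Let C be a collection of subsets of a set S that is closed under finite (binary) intersections, and suppose no member of C is a finite union of proper subsets belonging to C. If members X₁,...,X_m, Y₁,...,Y_n of C satisfy ⋃ᵢ Xᵢ ⊆ ⋃ⱼ Yⱼ, then for each i there is j with Xᵢ ⊆ Yⱼ. -/
/-!
If `X i ⊆ Y 1 ∪ ... ∪ Y n` but `X i ⊄ Y j` for every `j`, then the sets `X i ∩ Y j` lie in `C`, are
proper subsets of `X i`, and their union is `X i`, contradicting the hypothesis on `C`.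
-/

theorem Set.exists_subset_of_subset_iUnion_of_inter_mem {S ι : Type*} [Fintype ι]
    {C : Set (Set S)} (hinter : ∀ A ∈ C, ∀ B ∈ C, A ∩ B ∈ C)
    (hnounion : ∀ A ∈ C, ∀ l : List (Set S),
      (∀ B ∈ l, B ∈ C ∧ B ⊂ A) → A ≠ {x | ∃ B ∈ l, x ∈ B})
    {A : Set S} (hA : A ∈ C) (B : ι → Set S) (hB : ∀ j, B j ∈ C) (hAB : A ⊆ ⋃ j, B j) :
    ∃ j, A ⊆ B j := by
  by_contra! hnot
  let l : List (Set S) := Finset.univ.toList.map fun j => A ∩ B j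
  have hl : ∀ D ∈ l, D ∈ C ∧ D ⊂ A := by
    simp only [l, List.mem_map, Finset.mem_toList, Finset.mem_univ, true_and]
    rintro _ ⟨j, rfl⟩
    exact ⟨hinter A hA (B j) (hB j),
      Set.inter_subset_left.ssubset_of_ne fun heq => hnot j (heq ▸ Set.inter_subset_right)⟩
  have hunion : A = {x | ∃ D ∈ l, x ∈ D} := by
    ext x
    simp only [l, Set.mem_ofPred_eq, List.mem_map, Finset.mem_toList, Finset.mem_univ, true_and,
      exists_exists_eq_and, Set.mem_inter_iff]
    exact ⟨fun hx => (Set.mem_iUnion.1 (hAB hx)).imp fun _ hj => ⟨hx, hj⟩,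
      fun ⟨_, hx, _⟩ => hx⟩
  exact hnounion A hA l hl hunion

/-- Let `C` be a family of subsets of `S` closed under binary intersections such that
no member of `C` is a finite union of members of `C` properly contained in it. If
`X 1, ..., X m, Y 1, ..., Y n ∈ C` satisfy `⋃ i, X i ⊆ ⋃ j, Y j`, then each `X i` is
contained in some `Y j`. -/
theorem stmt_7 {S : Type*} (C : Set (Set S))
    (hinter : ∀ A ∈ C, ∀ B ∈ C, A ∩ B ∈ C)
    (hnounion : ∀ A ∈ C, ∀ l : List (Set S),
      (∀ B ∈ l, B ∈ C ∧ B ⊂ A) → A ≠ {x | ∃ B ∈ l, x ∈ B})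
    {m n : ℕ} (X : Fin m → Set S) (Y : Fin n → Set S)
    (hX : ∀ i, X i ∈ C) (hY : ∀ j, Y j ∈ C)
    (h : (⋃ i, X i) ⊆ ⋃ j, Y j) :
    ∀ i, ∃ j, X i ⊆ Y j := fun i =>
  Set.exists_subset_of_subset_iUnion_of_inter_mem hinter hnounion (hX i) Y hY
    ((Set.subset_iUnion X i).trans h)
end

section
/- Let M be a set with an injection f : M → M without cycles (fⁿ(x) ≠ x for all n ≥ 1). Define a simple subset of Mⁿ to be a set defined by a conjunction of conditions of the form x_i = fᵏ(x_j) and x_i = c (c ∈ M a constant). Then the intersection of two simple subsets of Mⁿ is either empty or simple. -/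
open Function Set

/-- `f` has no cycles: no iterate has a fixed point. -/
def NoCycles {M : Type} (f : M → M) : Prop := ∀ n : ℕ, 0 < n → ∀ x : M, f^[n] x ≠ x

/-- `(M, f, c)` is a model of the theory `T_N`: the `c i` are pairwise distinct,
`f` is a bijection from `M` onto `M` minus the `N` points `c 1, ..., c N`,
and `f` has no cycles. -/
structure ModelTN (N : ℕ) (M : Type) (f : M → M) (c : Fin N → M) : Prop where
  npos : 0 < N
  cinj : Function.Injective c
  finj : Function.Injective f
  frange : Set.range f = Set.univ \ Set.range c
  nocycles : NoCycles f

/-- A simple subset of `M^n`: defined by a conjunction of conditions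
`x i = f^[k] (x j)` and `x i = c`. -/
def IsSimple {M : Type} (f : M → M) {n : ℕ} (A : Set (Fin n → M)) : Prop :=
  ∃ (E : List (Fin n × Fin n × ℕ)) (Cs : List (Fin n × M)),
    A = {x | (∀ p ∈ E, x p.1 = f^[p.2.2] (x p.2.1)) ∧ (∀ q ∈ Cs, x q.1 = q.2)}

/-- Coordinate `i` is constant on `A`. -/
def ConstCoord {M : Type} {n : ℕ} (A : Set (Fin n → M)) (i : Fin n) : Prop :=
  ∃ a : M, ∀ x ∈ A, x i = a

/-- Coordinates `i`, `j` are related on `A` by an iterate of `f`. -/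
def RelCoord {M : Type} (f : M → M) {n : ℕ} (A : Set (Fin n → M)) (i j : Fin n) : Prop :=
  ∃ k : ℕ, (∀ x ∈ A, x i = f^[k] (x j)) ∨ (∀ x ∈ A, x j = f^[k] (x i))

/-- `rep` enumerates the equivalence classes of the partition associated to the
simple set `A`: each `rep a` is a non-constant coordinate, distinct `rep a`'s are
inequivalent, and every non-constant coordinate is equivalent to some `rep a`. -/
def ClassRep {M : Type} (f : M → M) {n : ℕ} (A : Set (Fin n → M)) {d : ℕ}
    (rep : Fin d → Fin n) : Prop :=
  (∀ a, ¬ ConstCoord A (rep a)) ∧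
  (∀ a b, a ≠ b → ¬ RelCoord f A (rep a) (rep b)) ∧
  (∀ i, ¬ ConstCoord A i → ∃ a, RelCoord f A i (rep a))

/-- Closed sets of the topology generated by the simple sets: finite unions of simple sets. -/
def ClosedInTop {M : Type} (f : M → M) {n : ℕ} (A : Set (Fin n → M)) : Prop :=
  ∃ l : List (Set (Fin n → M)), (∀ s ∈ l, IsSimple f s) ∧ A = {x | ∃ s ∈ l, x ∈ s}

/-- Closure in the topology generated by the simple sets. -/
def clTop {M : Type} (f : M → M) {n : ℕ} (A : Set (Fin n → M)) : Set (Fin n → M) :=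
  ⋂₀ {B | ClosedInTop f B ∧ A ⊆ B}

/-- There is a chain `Z 0 ⊊ Z 1 ⊊ ... ⊊ Z d ⊆ A` of nonempty simple sets. -/
def HasChain {M : Type} (f : M → M) {n : ℕ} (A : Set (Fin n → M)) (d : ℕ) : Prop :=
  ∃ Z : Fin (d+1) → Set (Fin n → M),
    StrictMono Z ∧ (∀ i, IsSimple f (Z i) ∧ (Z i).Nonempty) ∧ Z (Fin.last d) ⊆ A

/-- The dimension of a definable set is `d`: its closure contains a chain of `d+1`
nonempty simple sets but no chain of `d+2` such sets. -/
def HasDim {M : Type} (f : M → M) {n : ℕ} (A : Set (Fin n → M)) (d : ℕ) : Prop :=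
  HasChain f (clTop f A) d ∧ ¬ HasChain f (clTop f A) (d+1)

/-- Function symbols of the language `L_N`: `N` constants and one unary function. -/
def LNfun (N : ℕ) : ℕ → Type
  | 0 => Fin N
  | 1 => Unit
  | _ => Empty

/-- The language `L_N = {f, c_1, ..., c_N}`. -/
def LN (N : ℕ) : FirstOrder.Language := ⟨LNfun N, fun _ => Empty⟩

/-- The `L_N`-structure on `M` given by `f` and the constants `c`. -/
def SN {M : Type} (N : ℕ) (f : M → M) (c : Fin N → M) : (LN N).Structure M where
  funMap {k} F x :=
    match k, F, x with
    | 0, i, _ => c i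
    | 1, _, x => f (x 0)
    | (_+2), F, _ => F.elim
  RelMap {k} r _ := r.elim

/-- A subset of `M^α` is definable (with parameters) in the structure `(M, f, c)`. -/
def Defble {M : Type} (N : ℕ) (f : M → M) (c : Fin N → M) {α : Type}
    (s : Set (α → M)) : Prop :=
  letI := SN N f c
  Set.Definable (Set.univ : Set M) (LN N) s

/-- The product `F × A ⊆ M^(n+1)` of a finite subset of `M` and a subset of `M^n`. -/
def prodFS {M : Type} {n : ℕ} (F : Finset M) (A : Set (Fin n → M)) :
    Set (Fin (n+1) → M) :=
  {z | z (Fin.last n) ∈ (F : Set M) ∧ (fun i : Fin n => z i.castSucc) ∈ A}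

/-- A definable injection from `A ⊆ M^n` to `B ⊆ M^m`: an injection whose
(restricted) graph is a definable subset of `M^(n+m)`. -/
def DefInjOn {M : Type} (N : ℕ) (f : M → M) (c : Fin N → M) {n m : ℕ}
    (A : Set (Fin n → M)) (B : Set (Fin m → M)) : Prop :=
  ∃ g : (Fin n → M) → (Fin m → M), Set.InjOn g A ∧ Set.MapsTo g A B ∧
    Defble N f c {z : Fin (n+m) → M |
      (fun i : Fin n => z (Fin.castAdd m i)) ∈ A ∧
      (fun j : Fin m => z (Fin.natAdd n j)) = g (fun i : Fin n => z (Fin.castAdd m i))}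

/-- A definable bijection from `A ⊆ M^n` to `B ⊆ M^m`. -/
def DefBijOn {M : Type} (N : ℕ) (f : M → M) (c : Fin N → M) {n m : ℕ}
    (A : Set (Fin n → M)) (B : Set (Fin m → M)) : Prop :=
  ∃ g : (Fin n → M) → (Fin m → M), Set.BijOn g A B ∧
    Defble N f c {z : Fin (n+m) → M |
      (fun i : Fin n => z (Fin.castAdd m i)) ∈ A ∧
      (fun j : Fin m => z (Fin.natAdd n j)) = g (fun i : Fin n => z (Fin.castAdd m i))}

theorem IsSimple.inter {M : Type} {f : M → M} {n : ℕ} {A B : Set (Fin n → M)}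
    (hA : IsSimple f A) (hB : IsSimple f B) : IsSimple f (A ∩ B) := by
  obtain ⟨E₁, C₁, rfl⟩ := hA
  obtain ⟨E₂, C₂, rfl⟩ := hB
  refine ⟨E₁ ++ E₂, C₁ ++ C₂, ?_⟩
  ext x
  simp only [mem_inter_iff, mem_ofPred_eq, List.forall_mem_append, and_and_and_comm]

theorem stmt_8_general {M : Type} (f : M → M) {n : ℕ} (A B : Set (Fin n → M))
    (hA : IsSimple f A) (hB : IsSimple f B) :
    A ∩ B = ∅ ∨ IsSimple f (A ∩ B) :=
  Or.inr (hA.inter hB)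

/-- For a cycle-free injection `f : M → M`, the intersection of two simple subsets of
`M^n` is either empty or simple. -/
theorem stmt_8 {M : Type} (f : M → M) (hf : Function.Injective f)
    (hnc : NoCycles f) {n : ℕ} (A B : Set (Fin n → M))
    (hA : IsSimple f A) (hB : IsSimple f B) :
    A ∩ B = ∅ ∨ IsSimple f (A ∩ B) :=
  stmt_8_general f A B hA hB
end

section
/- Let M be a model of T_N and A ⊆ Mⁿ a nonempty simple set with d equivalence classes in its associated partition. Then there is a definable bijection between A and M^d; in particular, A is in bijection with M^d (as plain sets, realized by a map defined coordinatewise using iterates of f). -/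
open Function Set

/-!
Every coordinate of the nonempty simple set `A` is given on `A` by a term in the determining
coordinates: either a constant or `f^[k] (z (rep a))`. Because `f` is injective without cycles
and distinct classes are unrelated, this term is unique; hence every relation `z i = f^[K] (z j)`
or `z i = m` valid on `A` becomes an identity between terms, and so also holds for the tuple
obtained by evaluating the terms at an arbitrary `x : Fin d → M`. Evaluating the terms is
therefore a map `M^d → A`, inverse to the projection onto the determining coordinates.
-/

lemma NoCycles.eq_zero_of_iterate_eq {M : Type} {f : M → M} (hf : NoCycles f) {k : ℕ} {x : M}
    (hx : f^[k] x = x) : k = 0 :=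
  Nat.eq_zero_of_not_pos fun hk => hf k hk x hx

lemma Function.Injective.iterate_eq_iterate_iff_of_le {M : Type} {f : M → M}
    (hf : Injective f) {k l : ℕ} (hkl : k ≤ l) {u v : M} :
    f^[k] u = f^[l] v ↔ u = f^[l - k] v := by
  rw [← Nat.add_sub_cancel' hkl, iterate_add_apply, (hf.iterate k).eq_iff,
    Nat.add_sub_cancel_left]

lemma IsSimple.mem_of_forall {M : Type} {f : M → M} {n : ℕ} {A : Set (Fin n → M)}
    (hA : IsSimple f A) {y : Fin n → M}
    (hrel : ∀ i j K, (∀ z ∈ A, z i = f^[K] (z j)) → y i = f^[K] (y j))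
    (hconst : ∀ i m, (∀ z ∈ A, z i = m) → y i = m) : y ∈ A := by
  obtain ⟨E, Cs, rfl⟩ := hA
  exact ⟨fun p hp => hrel _ _ _ fun z hz => hz.1 p hp,
    fun q hq => hconst _ _ fun z hz => hz.2 q hq⟩

section Terms

variable {M : Type} (f : M → M) {d : ℕ}

/-- Terms in the variables `Fin d`: `inl m` is the constant `m` and `inr (a, k)` is
`f^[k] (x a)`. -/
def termEval (x : Fin d → M) : M ⊕ (Fin d × ℕ) → M :=
  Sum.elim id fun p => f^[p.2] (x p.1)

def termIterate (K : ℕ) : M ⊕ (Fin d × ℕ) → M ⊕ (Fin d × ℕ) :=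
  Sum.map f^[K] (Prod.map id (K + ·))

lemma termEval_termIterate (x : Fin d → M) (K : ℕ) (s : M ⊕ (Fin d × ℕ)) :
    termEval f x (termIterate f K s) = f^[K] (termEval f x s) := by
  rcases s with m | ⟨a, k⟩
  · rfl
  · exact iterate_add_apply f K k (x a)

variable {f} {n : ℕ} {A : Set (Fin n → M)} {rep : Fin d → Fin n}

lemma ClassRep.eq_of_iterate_eq_of_le (hrep : ClassRep f A rep) (hf : Injective f)
    (hc : NoCycles f) (hne : A.Nonempty) {a b : Fin d} {k l : ℕ} (hkl : k ≤ l)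
    (h : ∀ z ∈ A, f^[k] (z (rep a)) = f^[l] (z (rep b))) : a = b ∧ k = l := by
  obtain ⟨z₀, hz₀⟩ := hne
  have hrel : ∀ z ∈ A, z (rep a) = f^[l - k] (z (rep b)) := fun z hz =>
    (hf.iterate_eq_iterate_iff_of_le hkl).1 (h z hz)
  obtain rfl : a = b := by
    by_contra hab
    exact hrep.2.1 a b hab ⟨l - k, Or.inl hrel⟩
  have := hc.eq_zero_of_iterate_eq (hrel z₀ hz₀).symm
  exact ⟨rfl, by omega⟩

lemma ClassRep.eq_of_iterate_eq (hrep : ClassRep f A rep) (hf : Injective f)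
    (hc : NoCycles f) (hne : A.Nonempty) {a b : Fin d} {k l : ℕ}
    (h : ∀ z ∈ A, f^[k] (z (rep a)) = f^[l] (z (rep b))) : a = b ∧ k = l := by
  rcases le_total k l with hkl | hlk
  · exact hrep.eq_of_iterate_eq_of_le hf hc hne hkl h
  · obtain ⟨rfl, rfl⟩ := hrep.eq_of_iterate_eq_of_le hf hc hne hlk fun z hz => (h z hz).symm
    exact ⟨rfl, rfl⟩

lemma ClassRep.not_iterate_eq_const (hrep : ClassRep f A rep) (hf : Injective f)
    (hne : A.Nonempty) (a : Fin d) (k : ℕ) (m : M) :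
    ¬ ∀ z ∈ A, f^[k] (z (rep a)) = m := by
  obtain ⟨z₀, hz₀⟩ := hne
  intro h
  exact hrep.1 a ⟨z₀ (rep a), fun z hz => hf.iterate k ((h z hz).trans (h z₀ hz₀).symm)⟩

lemma ClassRep.term_eq_of_termEval_eq (hrep : ClassRep f A rep) (hf : Injective f)
    (hc : NoCycles f) (hne : A.Nonempty) {s t : M ⊕ (Fin d × ℕ)}
    (h : ∀ z ∈ A, termEval f (fun a => z (rep a)) s = termEval f (fun a => z (rep a)) t) :
    s = t := by
  rcases s with m | ⟨a, k⟩ <;> rcases t with m' | ⟨b, l⟩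
  · obtain ⟨z₀, hz₀⟩ := hne
    exact congrArg Sum.inl (h z₀ hz₀)
  · exact (hrep.not_iterate_eq_const hf hne b l m fun z hz => (h z hz).symm).elim
  · exact (hrep.not_iterate_eq_const hf hne a k m' h).elim
  · obtain ⟨rfl, rfl⟩ := hrep.eq_of_iterate_eq hf hc hne h
    rfl

lemma exists_termEval_eq_of_determined
    (hdet : ∀ i : Fin n, ¬ ConstCoord A i →
      ∃ (a : Fin d) (k : ℕ), ∀ x ∈ A, x i = f^[k] (x (rep a))) :
    ∃ t : Fin n → M ⊕ (Fin d × ℕ),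
      ∀ i, ∀ z ∈ A, z i = termEval f (fun a => z (rep a)) (t i) := by
  have h : ∀ i, ∃ s, ∀ z ∈ A, z i = termEval f (fun a => z (rep a)) s := fun i => by
    by_cases hi : ConstCoord A i
    · obtain ⟨m, hm⟩ := hi
      exact ⟨.inl m, hm⟩
    · obtain ⟨a, k, hak⟩ := hdet i hi
      exact ⟨.inr (a, k), hak⟩
  exact Classical.skolem.mp h

variable (hrep : ClassRep f A rep) (hf : Injective f) (hc : NoCycles f) (hne : A.Nonempty)
  {t : Fin n → M ⊕ (Fin d × ℕ)}
  (ht : ∀ i, ∀ z ∈ A, z i = termEval f (fun a => z (rep a)) (t i))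
include hrep hf hc hne ht

lemma ClassRep.term_rep (a : Fin d) : t (rep a) = .inr (a, 0) :=
  hrep.term_eq_of_termEval_eq hf hc hne fun z hz => (ht (rep a) z hz).symm

lemma IsSimple.termEval_mem (hA : IsSimple f A) (x : Fin d → M) :
    (fun i => termEval f x (t i)) ∈ A := by
  have term_eq : ∀ i s, (∀ z ∈ A, z i = termEval f (fun a => z (rep a)) s) → t i = s :=
    fun i s hs => hrep.term_eq_of_termEval_eq hf hc hne fun z hz =>
      (ht i z hz).symm.trans (hs z hz)
  refine hA.mem_of_forall (fun i j K hK => ?_) (fun i m hm => ?_)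
  · have hij : t i = termIterate f K (t j) := term_eq i _ fun z hz => by
      rw [termEval_termIterate, ← ht j z hz, hK z hz]
    rw [hij, termEval_termIterate]
  · rw [term_eq i (.inl m) hm]
    rfl

end Terms

/-- In a model of `T_N`, a nonempty simple set `A ⊆ M^n` whose associated partition has
`d` equivalence classes (enumerated by determining elements `rep`) is in definable
bijection with `M^d`: the bijection is given coordinatewise by iterates of `f` (or
constants), and in particular `A` is in bijection with `M^d`. -/
theorem stmt_9 {M : Type} (N : ℕ) (f : M → M) (c : Fin N → M)
    (h : ModelTN N M f c) {n : ℕ} (A : Set (Fin n → M))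
    (hA : IsSimple f A) (hne : A.Nonempty)
    {d : ℕ} (rep : Fin d → Fin n) (hrep : ClassRep f A rep)
    (hdet : ∀ i : Fin n, ¬ ConstCoord A i →
      ∃ (a : Fin d) (k : ℕ), ∀ x ∈ A, x i = f^[k] (x (rep a))) :
    ∃ g : (Fin d → M) → (Fin n → M),
      Set.BijOn g Set.univ A ∧
      (∀ (a : Fin d) (x : Fin d → M), g x (rep a) = x a) ∧
      (∀ i : Fin n,
        (∃ (k : ℕ) (a : Fin d), ∀ x : Fin d → M, g x i = f^[k] (x a)) ∨
        (∃ m : M, ∀ x : Fin d → M, g x i = m)) ∧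
      Nonempty (↥A ≃ (Fin d → M)) := by
  obtain ⟨t, ht⟩ := exists_termEval_eq_of_determined hdet
  set g : (Fin d → M) → (Fin n → M) := fun x i => termEval f x (t i)
  have hg_rep : ∀ a x, g x (rep a) = x a := fun a x => by
    simp only [g, hrep.term_rep h.finj h.nocycles hne ht a]
    rfl
  have hbij : BijOn g univ A := by
    refine InvOn.bijOn (f' := fun z a => z (rep a)) ⟨fun x _ => ?_, fun z hz => ?_⟩
      (fun x _ => hA.termEval_mem hrep h.finj h.nocycles hne ht x) (mapsTo_univ _ _)
    · exact funext fun a => hg_rep a x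
    · exact funext fun i => (ht i z hz).symm
  refine ⟨g, hbij, hg_rep, fun i => ?_, ⟨(hbij.equiv g).symm.trans (Equiv.Set.univ _)⟩⟩
  simp only [g]
  rcases t i with m | ⟨a, k⟩
  · exact .inr ⟨m, fun _ => rfl⟩
  · exact .inl ⟨k, a, fun _ => rfl⟩
end

section
/- Let M be a model of T_N. The topology on Mⁿ whose closed sets are generated by finite unions of simple sets (together with ∅ and Mⁿ) is Noetherian: every descending chain of closed sets stabilizes. -/
open Function Set

/-!
A nonempty simple set is described by its constant coordinates and the relations
`x i = f^[k] (x j)` between the other ones. Passing from `X` to a simple subset `Y`, classes of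
related non-constant coordinates can only merge or become constant. If their number does not
drop, `X` has the same constants and relations as `Y` (the absence of cycles makes the offset `k`
of a relation rigid), so `X ⊆ Y`. Hence this number strictly decreases along strict inclusions,
and simple sets satisfy the descending chain condition. Since they are closed under intersection,
the condition passes to their finite unions by well-founded induction on a simple set containing
the chain.
-/

open Filter

section FiniteUnions

variable {α : Type*} {P : Set α → Prop}

def IsFiniteUnion (P : Set α → Prop) (A : Set α) : Prop :=
  ∃ l : List (Set α), (∀ s ∈ l, P s) ∧ A = ⋃ s ∈ l, s

theorem IsFiniteUnion.inter (hP : ∀ s t, P s → P t → P (s ∩ t)) {A t : Set α}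
    (hA : IsFiniteUnion P A) (ht : P t) : IsFiniteUnion P (A ∩ t) := by
  obtain ⟨l, hl, rfl⟩ := hA
  refine ⟨l.map (· ∩ t), ?_, ?_⟩
  · simp only [List.mem_map]
    rintro _ ⟨s, hs, rfl⟩
    exact hP s t (hl s hs) ht
  · simp [iUnion₂_inter]

/-- Well-founded induction on `X`: unless the chain is constantly `X`, some member misses part
of `X`, and each of its pieces `s ⊊ X` carries the chain `Z m ∩ s`. -/
theorem exists_eventually_eq_of_wellFoundedLT [WellFoundedLT {s : Set α // P s}]
    (hP : ∀ s t, P s → P t → P (s ∩ t)) (X : {s : Set α // P s}) (Z : ℕ → Set α)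
    (hZ : ∀ m, IsFiniteUnion P (Z m)) (hanti : Antitone Z) (hZX : ∀ m, Z m ⊆ X) :
    ∃ c, ∀ᶠ m in atTop, Z m = c := by
  induction X using WellFoundedLT.induction generalizing Z with
  | _ X ih =>
  by_cases hall : ∀ m, (X : Set α) ⊆ Z m
  · exact ⟨X, Eventually.of_forall fun m => (hZX m).antisymm (hall m)⟩
  obtain ⟨m₀, hm₀⟩ := not_forall.1 hall
  obtain ⟨l, hl, hZl⟩ := hZ m₀
  have hpieces : ∀ s ∈ l, ∃ c, ∀ᶠ m in atTop, Z m ∩ s = c := by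
    intro s hs
    have hsZ : s ⊆ Z m₀ := hZl ▸ subset_biUnion_of_mem (u := id) hs
    have hsX : (⟨s, hl s hs⟩ : {s : Set α // P s}) < X :=
      (hsZ.trans (hZX m₀)).lt_of_ne fun h => hm₀ (h ▸ hsZ)
    exact ih _ hsX (fun m => Z m ∩ s) (fun m => (hZ m).inter hP (hl s hs))
      (fun a b hab => inter_subset_inter_left s (hanti hab)) (fun m => inter_subset_right)
  choose! c hc using hpieces
  refine ⟨⋃ s ∈ l, c s, ?_⟩
  filter_upwards [(eventually_all_finite l.finite_toSet).2 hc, eventually_ge_atTop m₀]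
    with m hm hm₀m
  calc Z m = Z m ∩ Z m₀ := (inter_eq_left.2 (hanti hm₀m)).symm
    _ = ⋃ s ∈ l, Z m ∩ s := by rw [hZl, inter_iUnion₂]
    _ = ⋃ s ∈ l, c s := iUnion₂_congr hm

end FiniteUnions

section Coordinates

variable {M : Type} {f : M → M} {n : ℕ} {A X Y : Set (Fin n → M)} {i j l : Fin n}

theorem NoCycles.eq_of_iterate_eq (hnc : NoCycles f) (hf : Injective f) {a b : ℕ} {u : M}
    (h : f^[a] u = f^[b] u) : a = b := by
  wlog hab : a ≤ b generalizing a b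
  · exact (this h.symm (le_of_not_ge hab)).symm
  by_contra hne
  refine hnc (b - a) (by omega) u (hf.iterate a ?_)
  rw [← iterate_add_apply, Nat.add_sub_cancel' hab, h]

theorem RelCoord.exists_iterate_eq (h : RelCoord f A i j) :
    ∃ a b : ℕ, ∀ x ∈ A, f^[a] (x i) = f^[b] (x j) := by
  obtain ⟨k, hk | hk⟩ := h
  · exact ⟨0, k, hk⟩
  · exact ⟨k, 0, fun x hx => (hk x hx).symm⟩

theorem relCoord_of_iterate_eq (hf : Injective f) {a b : ℕ}
    (h : ∀ x ∈ A, f^[a] (x i) = f^[b] (x j)) : RelCoord f A i j := by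
  rcases le_total a b with hab | hab
  · refine ⟨b - a, Or.inl fun x hx => hf.iterate a ?_⟩
    rw [h x hx, ← iterate_add_apply, Nat.add_sub_cancel' hab]
  · refine ⟨a - b, Or.inr fun x hx => hf.iterate b ?_⟩
    rw [← h x hx, ← iterate_add_apply, Nat.add_sub_cancel' hab]

theorem RelCoord.refl (f : M → M) (A : Set (Fin n → M)) (i : Fin n) : RelCoord f A i i :=
  ⟨0, Or.inl fun _ _ => rfl⟩

theorem RelCoord.symm (h : RelCoord f A i j) : RelCoord f A j i := by
  obtain ⟨k, hk⟩ := h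
  exact ⟨k, hk.symm⟩

theorem RelCoord.trans (hf : Injective f) (hij : RelCoord f A i j) (hjl : RelCoord f A j l) :
    RelCoord f A i l := by
  obtain ⟨a, b, hab⟩ := hij.exists_iterate_eq
  obtain ⟨c, d, hcd⟩ := hjl.exists_iterate_eq
  refine relCoord_of_iterate_eq hf (a := c + a) (b := b + d) fun x hx => ?_
  rw [iterate_add_apply, hab x hx, ← iterate_add_apply, add_comm, iterate_add_apply, hcd x hx,
    ← iterate_add_apply]

theorem RelCoord.mono (hYX : Y ⊆ X) (h : RelCoord f X i j) : RelCoord f Y i j := by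
  obtain ⟨k, hk | hk⟩ := h
  · exact ⟨k, Or.inl fun y hy => hk y (hYX hy)⟩
  · exact ⟨k, Or.inr fun y hy => hk y (hYX hy)⟩

theorem ConstCoord.mono (hYX : Y ⊆ X) (h : ConstCoord X i) : ConstCoord Y i := by
  obtain ⟨a, ha⟩ := h
  exact ⟨a, fun y hy => ha y (hYX hy)⟩

theorem ConstCoord.of_relCoord (hf : Injective f) {w : Fin n → M} (hw : w ∈ A)
    (hij : RelCoord f A i j) (hj : ConstCoord A j) : ConstCoord A i := by
  obtain ⟨a, b, hab⟩ := hij.exists_iterate_eq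
  obtain ⟨c, hc⟩ := hj
  exact ⟨w i, fun x hx => hf.iterate a (by rw [hab x hx, hab w hw, hc x hx, hc w hw])⟩

theorem RelCoord.eq_iterate (hf : Injective f) (hnc : NoCycles f) (h : RelCoord f A i j)
    {w : Fin n → M} (hw : w ∈ A) {k : ℕ} (hwk : w i = f^[k] (w j)) :
    ∀ x ∈ A, x i = f^[k] (x j) := by
  obtain ⟨a, b, hab⟩ := h.exists_iterate_eq
  have hb : a + k = b := hnc.eq_of_iterate_eq hf (u := w j) (by
    rw [iterate_add_apply, ← hwk, hab w hw])
  intro x hx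
  apply hf.iterate a
  rw [hab x hx, ← hb, iterate_add_apply]

end Coordinates

section SimpleSets

variable {M : Type} {f : M → M} {n : ℕ} {A X Y : Set (Fin n → M)}

theorem isSimple_univ (f : M → M) : IsSimple f (univ : Set (Fin n → M)) :=
  ⟨[], [], by simp⟩

theorem IsSimple.inter_s11 (hX : IsSimple f X) (hY : IsSimple f Y) : IsSimple f (X ∩ Y) := by
  obtain ⟨E₁, C₁, rfl⟩ := hX
  obtain ⟨E₂, C₂, rfl⟩ := hY
  refine ⟨E₁ ++ E₂, C₁ ++ C₂, ?_⟩
  ext x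
  simp only [mem_inter_iff, mem_ofPred_eq, List.mem_append, or_imp, forall_and]
  tauto

theorem ClosedInTop.isFiniteUnion (h : ClosedInTop f A) : IsFiniteUnion (IsSimple f) A := by
  obtain ⟨l, hl, rfl⟩ := h
  exact ⟨l, hl, by ext; simp⟩

theorem IsSimple.subset_of_eqns (hY : IsSimple f Y)
    (hrel : ∀ i j k, (∀ y ∈ Y, y i = f^[k] (y j)) → ∀ x ∈ X, x i = f^[k] (x j))
    (hconst : ∀ i a, (∀ y ∈ Y, y i = a) → ∀ x ∈ X, x i = a) : X ⊆ Y := by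
  obtain ⟨E, C, rfl⟩ := hY
  intro x hx
  refine ⟨fun p hp => hrel p.1 p.2.1 p.2.2 (fun y hy => hy.1 p hp) x hx,
    fun q hq => hconst q.1 q.2 (fun y hy => hy.2 q hq) x hx⟩

theorem IsSimple.subset_of_constCoord_of_relCoord (hf : Injective f) (hnc : NoCycles f)
    (hY : IsSimple f Y) {w : Fin n → M} (hw : w ∈ Y) (hYX : Y ⊆ X)
    (hconst : ∀ i, ConstCoord Y i → ConstCoord X i)
    (hrel : ∀ i j, ¬ ConstCoord X i → ¬ ConstCoord X j → RelCoord f Y i j → RelCoord f X i j) :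
    X ⊆ Y := by
  refine hY.subset_of_eqns (fun i j k hijk => ?_) (fun i a hia => ?_)
  · have hYij : RelCoord f Y i j := ⟨k, Or.inl hijk⟩
    by_cases hj : ConstCoord X j
    · obtain ⟨a, ha⟩ := hj
      obtain ⟨b, hb⟩ := hconst i ⟨f^[k] a, fun y hy => by rw [hijk y hy, ha y (hYX hy)]⟩
      intro x hx
      rw [hb x hx, ha x hx, ← ha w (hYX hw), ← hijk w hw, hb w (hYX hw)]
    · have hi : ¬ ConstCoord X i := fun hi =>
        hj (hconst j ((hi.mono hYX).of_relCoord hf hw hYij.symm))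
      exact (hrel i j hi hj hYij).eq_iterate hf hnc (hYX hw) (hijk w hw)
  · obtain ⟨b, hb⟩ := hconst i ⟨a, hia⟩
    intro x hx
    rw [hb x hx, ← hia w hw, hb w (hYX hw)]

end SimpleSets

section Dimension

variable {M : Type} {f : M → M} {n : ℕ} {A X Y : Set (Fin n → M)} {R : Finset (Fin n)}

def IndepCoords (f : M → M) (A : Set (Fin n → M)) (R : Finset (Fin n)) : Prop :=
  (∀ i ∈ R, ¬ ConstCoord A i) ∧ ∀ i ∈ R, ∀ j ∈ R, RelCoord f A i j → i = j

/-- For nonempty `A`, `RelCoord f A` is an equivalence relation and this counts the classes of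
non-constant coordinates: the dimension of `A` when `A` is simple. -/
noncomputable def coordDim (f : M → M) (A : Set (Fin n → M)) : ℕ :=
  open Classical in (Finset.univ.filter (IndepCoords f A)).sup Finset.card

theorem IndepCoords.card_le_coordDim (h : IndepCoords f A R) : R.card ≤ coordDim f A := by
  classical
  exact Finset.le_sup (f := Finset.card) (Finset.mem_filter.2 ⟨Finset.mem_univ R, h⟩)

theorem exists_indepCoords_card_eq_coordDim (f : M → M) (A : Set (Fin n → M)) :
    ∃ R, IndepCoords f A R ∧ R.card = coordDim f A := by
  classical
  have hempty : IndepCoords f A ∅ := ⟨by simp, by simp⟩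
  obtain ⟨R, hR, hcard⟩ := Finset.exists_mem_eq_sup _
    ⟨∅, Finset.mem_filter.2 ⟨Finset.mem_univ _, hempty⟩⟩ Finset.card
  exact ⟨R, (Finset.mem_filter.1 hR).2, hcard.symm⟩

theorem IndepCoords.mono (hYX : Y ⊆ X) (h : IndepCoords f Y R) : IndepCoords f X R :=
  ⟨fun i hi hc => h.1 i hi (hc.mono hYX), fun i hi j hj hr => h.2 i hi j hj (hr.mono hYX)⟩

theorem coordDim_mono (hYX : Y ⊆ X) : coordDim f Y ≤ coordDim f X := by
  obtain ⟨R, hR, hcard⟩ := exists_indepCoords_card_eq_coordDim f Y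
  exact hcard ▸ (hR.mono hYX).card_le_coordDim

theorem IndepCoords.exists_relCoord (hR : IndepCoords f A R) (hcard : coordDim f A ≤ R.card)
    {i : Fin n} (hi : ¬ ConstCoord A i) : ∃ j ∈ R, RelCoord f A i j := by
  classical
  by_contra! hno
  have hiR : i ∉ R := fun hiR => hno i hiR (.refl f A i)
  have hindep : IndepCoords f A (insert i R) := by
    refine ⟨Finset.forall_mem_insert _ _ _ |>.2 ⟨hi, hR.1⟩, fun j hj l hl hjl => ?_⟩
    rw [Finset.mem_insert] at hj hl
    rcases hj with rfl | hj <;> rcases hl with rfl | hl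
    · rfl
    · exact absurd hjl (hno l hl)
    · exact absurd hjl.symm (hno j hj)
    · exact hR.2 j hj l hl hjl
  have := hindep.card_le_coordDim
  rw [Finset.card_insert_of_notMem hiR] at this
  omega

/-- A maximum independent family for `Y` is then also one for `X`, so it represents every class
of `X`; hence `X` has the same constant coordinates and the same relations as `Y`. -/
theorem IsSimple.subset_of_coordDim_le (hf : Injective f) (hnc : NoCycles f)
    (hY : IsSimple f Y) {w : Fin n → M} (hw : w ∈ Y) (hYX : Y ⊆ X)
    (hd : coordDim f X ≤ coordDim f Y) : X ⊆ Y := by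
  obtain ⟨R, hR, hcard⟩ := exists_indepCoords_card_eq_coordDim f Y
  have hrep : ∀ i, ¬ ConstCoord X i → ∃ j ∈ R, RelCoord f X i j :=
    fun i => (hR.mono hYX).exists_relCoord (hcard ▸ hd)
  refine hY.subset_of_constCoord_of_relCoord hf hnc hw hYX (fun i hi => ?_)
    (fun i j hi hj hij => ?_)
  · by_contra hXi
    obtain ⟨i', hi', hii'⟩ := hrep i hXi
    exact hR.1 i' hi' (hi.of_relCoord hf hw (hii'.mono hYX).symm)
  · obtain ⟨i', hi', hii'⟩ := hrep i hi
    obtain ⟨j', hj', hjj'⟩ := hrep j hj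
    have hi'j' : i' = j' :=
      hR.2 i' hi' j' hj' (((hii'.mono hYX).symm.trans hf hij).trans hf (hjj'.mono hYX))
    exact hii'.trans hf (hi'j' ▸ hjj'.symm)

theorem IsSimple.coordDim_lt (hf : Injective f) (hnc : NoCycles f) (hY : IsSimple f Y)
    (hne : Y.Nonempty) (hYX : Y ⊂ X) : coordDim f Y < coordDim f X := by
  obtain ⟨w, hw⟩ := hne
  exact (coordDim_mono hYX.subset).lt_of_not_ge fun hd =>
    hYX.2 (hY.subset_of_coordDim_le hf hnc hw hYX.subset hd)

theorem wellFoundedLT_isSimple (hf : Injective f) (hnc : NoCycles f) :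
    WellFoundedLT {s : Set (Fin n → M) // IsSimple f s} := by
  classical
  refine StrictMono.wellFoundedLT (β := ℕ)
    (f := fun s : {s : Set (Fin n → M) // IsSimple f s} =>
      if s.1.Nonempty then coordDim f s.1 + 1 else 0) ?_
  rintro ⟨Y, hY⟩ ⟨X, hX⟩ (hYX : Y ⊂ X)
  obtain ⟨x, hx, -⟩ := exists_of_ssubset hYX
  dsimp only
  rw [if_pos (show X.Nonempty from ⟨x, hx⟩)]
  split_ifs with hYne
  · exact Nat.succ_lt_succ (hY.coordDim_lt hf hnc hYne hYX)
  · exact Nat.succ_pos _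

end Dimension

/-- In a model of `T_N`, the topology on `M^n` whose closed sets are generated by the
simple sets (i.e. are the finite unions of simple sets) is Noetherian: every descending
chain of closed sets stabilizes. -/
theorem stmt_11 {M : Type} (N : ℕ) (f : M → M) (c : Fin N → M)
    (h : ModelTN N M f c) {n : ℕ}
    (Z : ℕ → Set (Fin n → M))
    (hcl : ∀ m : ℕ, ClosedInTop f (Z m))
    (hdec : ∀ m : ℕ, Z (m+1) ⊆ Z m) :
    ∃ K : ℕ, ∀ m : ℕ, K ≤ m → Z m = Z K := by
  have := wellFoundedLT_isSimple h.finj h.nocycles (n := n)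
  obtain ⟨c', hc'⟩ := exists_eventually_eq_of_wellFoundedLT (fun _ _ => IsSimple.inter_s11)
    ⟨univ, isSimple_univ f⟩ Z (fun m => (hcl m).isFiniteUnion) (antitone_nat_of_succ_le hdec)
    (fun m => subset_univ (Z m))
  obtain ⟨K, hK⟩ := eventually_atTop.1 hc'
  exact ⟨K, fun m hm => (hK m hm).trans (hK K le_rfl).symm⟩
end

section
/- In the Noetherian topology on Mⁿ generated by the simple sets, the irreducible closed sets are exactly the nonempty simple sets. -/
open Function Set

/-!
Let `A` be a nonempty simple set and `p ∈ A`. Call coordinates `i`, `j` linked on `A` if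
`f^[a] (x i) = f^[b] (x j)` for all `x ∈ A`. Give the coordinates that are constant on `A` weight
`0` and each remaining linked class its own positive weight `w`, and move `p` along `f` at these
speeds: `x_t i = f^[t * w i] (p i)`. Every `x_t` lies in `A`, and since `f` is injective without
cycles, an equation `x i = f^[k] (x j)` or `x i = m` holding at two different `x_t` holds on all
of `A`. So if finitely many simple sets cover `A`, one of them contains two of the `x_t` by
pigeonhole, hence contains `A`: a nonempty simple set is irreducible. Conversely an irreducible
closed set, being a finite union of simple subsets, equals one of them.
-/

namespace NoCycles

variable {M : Type} {f : M → M}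

theorem iterate_eq_iterate_iff (hf : Injective f) (hnc : NoCycles f) {a b : ℕ} {u : M} :
    f^[a] u = f^[b] u ↔ a = b := by
  refine ⟨fun h => ?_, fun h => h ▸ rfl⟩
  by_contra hne
  rcases Nat.lt_or_gt_of_ne hne with hlt | hlt
  · exact hnc (b - a) (by omega) u (iterate_cancel hf h.symm)
  · exact hnc (a - b) (by omega) u (iterate_cancel hf h)

/-- The offset from `x` to `y` along an orbit of `f` is well defined. -/
theorem add_eq_add_of_iterate_eq (hf : Injective f) (hnc : NoCycles f) {x y : M}
    {a b a' b' : ℕ} (h : f^[a] x = f^[b] y) (h' : f^[a'] x = f^[b'] y) : a + b' = a' + b := by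
  refine (iterate_eq_iterate_iff hf hnc (u := y)).1 ?_
  rw [iterate_add_apply, ← h', ← iterate_add_apply, add_comm, iterate_add_apply, h,
    ← iterate_add_apply]

end NoCycles

section Generic

variable {M : Type} {f : M → M} {n : ℕ} {A : Set (Fin n → M)} {i j : Fin n}

def Linked (f : M → M) (A : Set (Fin n → M)) (i j : Fin n) : Prop :=
  ∃ a b : ℕ, ∀ x ∈ A, f^[a] (x i) = f^[b] (x j)

theorem linked_equivalence : Equivalence (Linked f A) where
  refl _ := ⟨0, 0, fun _ _ => rfl⟩
  symm := fun ⟨a, b, h⟩ => ⟨b, a, fun x hx => (h x hx).symm⟩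
  trans := fun ⟨a, b, h⟩ ⟨a', b', h'⟩ => ⟨a' + a, b + b', fun x hx => by
    rw [iterate_add_apply, h x hx, (Commute.iterate_iterate_self f a' b).eq, h' x hx,
      ← iterate_add_apply]⟩

def linkedSetoid (f : M → M) (A : Set (Fin n → M)) : Setoid (Fin n) :=
  ⟨Linked f A, linked_equivalence⟩

theorem Linked.constCoord (hf : Injective f) (hij : Linked f A i j) (hi : ConstCoord A i) :
    ConstCoord A j := by
  obtain ⟨a, b, h⟩ := hij
  obtain ⟨α, hα⟩ := hi
  rcases A.eq_empty_or_nonempty with rfl | ⟨y, hy⟩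
  · exact ⟨α, by simp⟩
  refine ⟨y j, fun x hx => hf.iterate b ?_⟩
  rw [← h x hx, ← h y hy, hα x hx, hα y hy]

theorem Linked.forall_eq_iterate (hf : Injective f) (hnc : NoCycles f) (hij : Linked f A i j)
    {p : Fin n → M} (hp : p ∈ A) {k : ℕ} (hk : p i = f^[k] (p j)) :
    ∀ x ∈ A, x i = f^[k] (x j) := by
  obtain ⟨a, b, h⟩ := hij
  have hb : a + k = b := by
    have hpk := h p hp
    rw [hk, ← iterate_add_apply] at hpk
    exact (NoCycles.iterate_eq_iterate_iff hf hnc).1 hpk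
  intro x hx
  apply hf.iterate a
  rw [h x hx, ← hb, iterate_add_apply]

open Classical in
noncomputable def weight (f : M → M) (A : Set (Fin n → M)) (i : Fin n) : ℕ :=
  if ConstCoord A i then 0 else ((Quotient.mk (linkedSetoid f A) i).out : ℕ) + 1

theorem weight_eq_zero_iff : weight f A i = 0 ↔ ConstCoord A i := by
  unfold weight
  split_ifs with h <;> simp [h]

theorem Linked.weight_eq (hf : Injective f) (hij : Linked f A i j) :
    weight f A i = weight f A j := by
  unfold weight
  by_cases hi : ConstCoord A i
  · rw [if_pos hi, if_pos (hij.constCoord hf hi)]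
  · have hj : ¬ ConstCoord A j := fun hj => hi ((linked_equivalence.symm hij).constCoord hf hj)
    rw [if_neg hi, if_neg hj, Quotient.sound (s := linkedSetoid f A) hij]

theorem linked_of_weight_eq (h : weight f A i = weight f A j) (hi : weight f A i ≠ 0) :
    Linked f A i j := by
  have hj : weight f A j ≠ 0 := h ▸ hi
  rw [Ne, weight_eq_zero_iff] at hi hj
  unfold weight at h
  rw [if_neg hi, if_neg hj, add_left_inj, Fin.val_inj, Quotient.out_inj] at h
  exact Quotient.exact h

noncomputable def genericSeq (f : M → M) (A : Set (Fin n → M)) (p : Fin n → M) (t : ℕ) :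
    Fin n → M :=
  fun i => f^[t * weight f A i] (p i)

variable {p : Fin n → M} {s t : ℕ}

theorem IsSimple.genericSeq_mem (hf : Injective f) (hA : IsSimple f A) (hp : p ∈ A) (t : ℕ) :
    genericSeq f A p t ∈ A := by
  obtain ⟨E, Cs, hA⟩ := hA
  have hmem (x : Fin n → M) := Set.ext_iff.1 hA x
  refine (hmem _).2 ⟨fun e he => ?_, fun q hq => ?_⟩
  · have hlink : Linked f A e.1 e.2.1 := ⟨0, e.2.2, fun x hx => ((hmem x).1 hx).1 e he⟩
    rw [genericSeq, hlink.weight_eq hf, ((hmem p).1 hp).1 e he]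
    exact (Commute.iterate_iterate_self f _ _).eq _
  · have h0 : weight f A q.1 = 0 :=
      weight_eq_zero_iff.2 ⟨q.2, fun x hx => ((hmem x).1 hx).2 q hq⟩
    rw [genericSeq, h0, mul_zero, iterate_zero, id]
    exact ((hmem p).1 hp).2 q hq

theorem forall_eq_iterate_of_genericSeq (hf : Injective f) (hnc : NoCycles f) (hp : p ∈ A)
    (hst : s ≠ t) {k : ℕ}
    (hs : genericSeq f A p s i = f^[k] (genericSeq f A p s j))
    (ht : genericSeq f A p t i = f^[k] (genericSeq f A p t j)) :
    ∀ x ∈ A, x i = f^[k] (x j) := by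
  simp only [genericSeq, ← iterate_add_apply] at hs ht
  have hw : weight f A i = weight f A j := by
    have hoff : (s * weight f A i + (k + t * weight f A j) : ℤ) =
        t * weight f A i + (k + s * weight f A j) := by
      exact_mod_cast NoCycles.add_eq_add_of_iterate_eq hf hnc hs ht
    have hprod : ((s : ℤ) - t) * ((weight f A i : ℤ) - weight f A j) = 0 := by linarith
    rcases mul_eq_zero.1 hprod with h | h
    · exact absurd (by linarith) hst
    · exact_mod_cast sub_eq_zero.1 h
  by_cases h0 : weight f A i = 0
  · obtain ⟨α, hα⟩ := weight_eq_zero_iff.1 h0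
    obtain ⟨β, hβ⟩ := weight_eq_zero_iff.1 (hw ▸ h0)
    rw [← hw, h0, mul_zero, add_zero, iterate_zero, id] at hs
    intro x hx
    rw [hα x hx, hβ x hx, ← hα p hp, ← hβ p hp, hs]
  · refine (linked_of_weight_eq hw h0).forall_eq_iterate hf hnc hp ?_
    rw [← hw, add_comm, iterate_add_apply] at hs
    exact hf.iterate _ hs

theorem forall_eq_of_genericSeq (hf : Injective f) (hnc : NoCycles f) (hp : p ∈ A)
    (hst : s ≠ t) {m : M} (hs : genericSeq f A p s i = m) (ht : genericSeq f A p t i = m) :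
    ∀ x ∈ A, x i = m := by
  have h0 : weight f A i = 0 := by
    have hmul := (NoCycles.iterate_eq_iterate_iff hf hnc).1 (hs.trans ht.symm)
    by_contra hw
    exact hst (Nat.eq_of_mul_eq_mul_right (Nat.pos_of_ne_zero hw) hmul)
  obtain ⟨α, hα⟩ := weight_eq_zero_iff.1 h0
  intro x hx
  rw [hα x hx, ← hα p hp]
  simpa [genericSeq, h0] using hs

theorem IsSimple.subset_of_genericSeq_mem (hf : Injective f) (hnc : NoCycles f) (hp : p ∈ A)
    {B : Set (Fin n → M)} (hB : IsSimple f B) (hst : s ≠ t)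
    (hs : genericSeq f A p s ∈ B) (ht : genericSeq f A p t ∈ B) : A ⊆ B := by
  obtain ⟨E, Cs, rfl⟩ := hB
  exact fun x hx =>
    ⟨fun e he => forall_eq_iterate_of_genericSeq hf hnc hp hst (hs.1 e he) (ht.1 e he) x hx,
      fun q hq => forall_eq_of_genericSeq hf hnc hp hst (hs.2 q hq) (ht.2 q hq) x hx⟩

theorem IsSimple.exists_subset_of_subset_union (hf : Injective f) (hnc : NoCycles f)
    (hA : IsSimple f A) (hne : A.Nonempty) {l : List (Set (Fin n → M))}
    (hl : ∀ B ∈ l, IsSimple f B) (hcov : A ⊆ {x | ∃ B ∈ l, x ∈ B}) : ∃ B ∈ l, A ⊆ B := by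
  obtain ⟨p, hp⟩ := hne
  choose g hgl hgp using fun t => hcov (hA.genericSeq_mem hf hp t)
  have := l.finite_toSet.to_subtype
  obtain ⟨s, t, hst, hgst⟩ :=
    Finite.exists_ne_map_eq_of_infinite (fun t => (⟨g t, hgl t⟩ : {B | B ∈ l}))
  have hgst : g s = g t := congrArg Subtype.val hgst
  exact ⟨g s, hgl s, (hl _ (hgl s)).subset_of_genericSeq_mem hf hnc hp hst (hgp s)
    (hgst ▸ hgp t)⟩

end Generic

section Closed

variable {M : Type} {f : M → M} {n : ℕ} {A : Set (Fin n → M)}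

theorem IsSimple.closedInTop (hA : IsSimple f A) : ClosedInTop f A :=
  ⟨[A], by simpa using hA, by ext; simp⟩

theorem exists_eq_of_forall_ne_union (hne : A.Nonempty)
    (hirr : ∀ F G : Set (Fin n → M), ClosedInTop f F → ClosedInTop f G →
      F ⊂ A → G ⊂ A → A ≠ F ∪ G) :
    ∀ {l : List (Set (Fin n → M))}, (∀ B ∈ l, IsSimple f B) → A = {x | ∃ B ∈ l, x ∈ B} →
      ∃ B ∈ l, A = B
  | [], _, hA => by simp [hA] at hne
  | B :: l, hl, hA => by
    have hunion : A = B ∪ {x | ∃ C ∈ l, x ∈ C} := by rw [hA]; ext; simp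
    have hl' : ∀ C ∈ l, IsSimple f C := fun C hC => hl C (List.mem_cons_of_mem B hC)
    by_cases hB : A = B
    · exact ⟨B, List.mem_cons_self, hB⟩
    by_cases hrest : A = {x | ∃ C ∈ l, x ∈ C}
    · obtain ⟨C, hC, hAC⟩ := exists_eq_of_forall_ne_union hne hirr hl' hrest
      exact ⟨C, List.mem_cons_of_mem B hC, hAC⟩
    refine absurd hunion (hirr _ _ (hl B List.mem_cons_self).closedInTop ⟨l, hl', rfl⟩ ?_ ?_)
    · exact (hunion ▸ subset_union_left).ssubset_of_ne (Ne.symm hB)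
    · exact (hunion ▸ subset_union_right).ssubset_of_ne (Ne.symm hrest)

end Closed

/-- In the Noetherian topology on `M^n` generated by the simple sets (for `M` a model
of `T_N`), the irreducible closed sets (nonempty closed sets that are not the union of
two proper closed subsets) are exactly the nonempty simple sets. -/
theorem stmt_12 {M : Type} (N : ℕ) (f : M → M) (c : Fin N → M)
    (h : ModelTN N M f c) {n : ℕ} (A : Set (Fin n → M)) :
    (ClosedInTop f A ∧ A.Nonempty ∧
      ∀ F G : Set (Fin n → M), ClosedInTop f F → ClosedInTop f G →
        F ⊂ A → G ⊂ A → A ≠ F ∪ G)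
    ↔ (IsSimple f A ∧ A.Nonempty) := by
  constructor
  · rintro ⟨⟨l, hl, hA⟩, hne, hirr⟩
    obtain ⟨B, hB, rfl⟩ := exists_eq_of_forall_ne_union hne hirr hl hA
    exact ⟨hl _ hB, hne⟩
  · rintro ⟨hA, hne⟩
    refine ⟨hA.closedInTop, hne, ?_⟩
    rintro F G ⟨lF, hlF, rfl⟩ ⟨lG, hlG, rfl⟩ hFA hGA hFG
    have hcov : A ⊆ {x | ∃ B ∈ lF ++ lG, x ∈ B} := by
      rw [hFG]; rintro x (⟨B, hB, hx⟩ | ⟨B, hB, hx⟩) <;> exact ⟨B, by simp [hB], hx⟩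
    obtain ⟨B, hB, hAB⟩ := hA.exists_subset_of_subset_union h.finj h.nocycles hne
      (fun B hB => (List.mem_append.1 hB).elim (hlF B) (hlG B)) hcov
    rcases List.mem_append.1 hB with hB | hB
    · exact hFA.2 (hAB.trans fun x hx => ⟨B, hB, hx⟩)
    · exact hGA.2 (hAB.trans fun x hx => ⟨B, hB, hx⟩)
end

section
/- Let A ⊆ Mⁿ be a simple set of topological dimension d (i.e., the longest chain ∅ ⊊ Z₀ ⊊ ... ⊊ Z_d = A of simple sets has length d). Then d equals the number of equivalence classes of A, and hence A is in definable bijection with M^d. -/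
open Function Set

/-!
Call two coordinates of a simple set `A` linked when `f^[p] (x i) = f^[q] (x j)` on `A`.
Since `f` is injective without cycles, every class of non-constant coordinates has a root of
which all its members are forward iterates, and restriction to one root per class is a bijection
from a nonempty simple `A` onto `M^R`. A strictly larger simple set has strictly more classes:
with equally many, every class of the larger set contains a root of the smaller one, so its
points are determined by those roots and lie in the smaller set. Hence a chain ending at `A` is
no longer than the number of classes, and pinning the roots to their values at a point of `A`
one at a time gives a chain of exactly that length.
-/

theorem le_apply_last_of_strictMono {d : ℕ} {g : Fin (d + 1) → ℕ} (hg : StrictMono g) :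
    d ≤ g (Fin.last d) := by
  have himage : (Finset.univ.image g).card = d + 1 := by
    rw [Finset.card_image_of_injective _ hg.injective, Finset.card_univ, Fintype.card_fin]
  have hsub : Finset.univ.image g ⊆ Finset.range (g (Fin.last d) + 1) := by
    intro m hm
    obtain ⟨i, -, rfl⟩ := Finset.mem_image.1 hm
    exact Finset.mem_range_succ_iff.2 (hg.monotone (Fin.le_last i))
  have hcard := Finset.card_le_card hsub
  rw [himage, Finset.card_range] at hcard
  omega

section

variable {M : Type} {f : M → M} {n : ℕ}

theorem NoCycles.iterate_apply_injective (hnc : NoCycles f) (hf : Injective f) (z : M) :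
    Injective fun k : ℕ => f^[k] z := by
  suffices h : ∀ a c, f^[a] z = f^[a + c] z → c = 0 by
    intro a b hab
    rcases le_total a b with hle | hle
    · obtain ⟨c, rfl⟩ := Nat.exists_eq_add_of_le hle
      simp [h a c hab]
    · obtain ⟨c, rfl⟩ := Nat.exists_eq_add_of_le hle
      simp [h b c hab.symm]
  intro a c h
  rw [iterate_add_apply] at h
  by_contra hc
  exact hnc c (Nat.pos_of_ne_zero hc) z (hf.iterate a h).symm

theorem ConstCoord.mono_s13 {Z Z' : Set (Fin n → M)} (h : Z ⊆ Z') {i : Fin n}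
    (hi : ConstCoord Z' i) : ConstCoord Z i :=
  let ⟨a, ha⟩ := hi
  ⟨a, fun x hx => ha x (h hx)⟩

theorem IsSimple.mem_of_forall_s13 {Z : Set (Fin n → M)} (hZ : IsSimple f Z) {u : Fin n → M}
    (hrel : ∀ i j k, (∀ x ∈ Z, x i = f^[k] (x j)) → u i = f^[k] (u j))
    (hconst : ∀ i a, (∀ x ∈ Z, x i = a) → u i = a) : u ∈ Z := by
  obtain ⟨E, Cs, rfl⟩ := hZ
  exact ⟨fun p hp => hrel _ _ _ fun x hx => hx.1 p hp,
    fun q hq => hconst _ _ fun x hx => hx.2 q hq⟩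

theorem IsSimple.sep_eqOn {A : Set (Fin n → M)} (hA : IsSimple f A) (S : Finset (Fin n))
    (v : Fin n → M) : IsSimple f {x | x ∈ A ∧ ∀ i ∈ S, x i = v i} := by
  obtain ⟨E, Cs, rfl⟩ := hA
  refine ⟨E, Cs ++ S.toList.map fun i => (i, v i), ?_⟩
  ext x
  simp only [mem_ofPred_eq, List.mem_append, List.mem_map, Finset.mem_toList, or_imp,
    forall_and, forall_exists_index, and_imp, forall_apply_eq_imp_iff₂, and_assoc]

end

namespace SimpleSet

variable {M : Type} {f : M → M} {n : ℕ}

def Linked (f : M → M) (Z : Set (Fin n → M)) (i j : Fin n) : Prop :=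
  ∃ p q : ℕ, ∀ x ∈ Z, f^[p] (x i) = f^[q] (x j)

namespace Linked

variable {Z Z' : Set (Fin n → M)} {i j k : Fin n}

theorem refl (Z : Set (Fin n → M)) (i : Fin n) : Linked f Z i i :=
  ⟨0, 0, fun _ _ => rfl⟩

theorem symm (h : Linked f Z i j) : Linked f Z j i :=
  let ⟨p, q, h⟩ := h
  ⟨q, p, fun x hx => (h x hx).symm⟩

theorem trans (hij : Linked f Z i j) (hjk : Linked f Z j k) : Linked f Z i k := by
  obtain ⟨p, q, hij⟩ := hij
  obtain ⟨p', q', hjk⟩ := hjk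
  refine ⟨p' + p, q + q', fun x hx => ?_⟩
  rw [iterate_add_apply, hij x hx, ← iterate_add_apply, add_comm, iterate_add_apply, hjk x hx,
    ← iterate_add_apply]

theorem mono_s13 (h : Z ⊆ Z') (hij : Linked f Z' i j) : Linked f Z i j :=
  let ⟨p, q, hij⟩ := hij
  ⟨p, q, fun x hx => hij x (h hx)⟩

theorem of_eq_iterate {k : ℕ} (h : ∀ x ∈ Z, x i = f^[k] (x j)) : Linked f Z i j :=
  ⟨0, k, h⟩

theorem relCoord (hf : Injective f) (h : Linked f Z i j) : RelCoord f Z i j := by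
  obtain ⟨p, q, h⟩ := h
  rcases le_total p q with hpq | hpq
  · obtain ⟨k, rfl⟩ := Nat.exists_eq_add_of_le hpq
    exact ⟨k, Or.inl fun x hx => hf.iterate p (by rw [h x hx, iterate_add_apply])⟩
  · obtain ⟨k, rfl⟩ := Nat.exists_eq_add_of_le hpq
    exact ⟨k, Or.inr fun x hx => hf.iterate q (by rw [← h x hx, iterate_add_apply])⟩

end Linked

theorem _root_.RelCoord.linked {Z : Set (Fin n → M)} {i j : Fin n} (h : RelCoord f Z i j) :
    Linked f Z i j := by
  obtain ⟨k, h | h⟩ := h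
  · exact Linked.of_eq_iterate h
  · exact (Linked.of_eq_iterate h).symm

theorem _root_.ConstCoord.of_linked (hf : Injective f) {Z : Set (Fin n → M)} {i j : Fin n}
    (h : Linked f Z i j) (hi : ConstCoord Z i) : ConstCoord Z j := by
  obtain ⟨p, q, h⟩ := h
  obtain ⟨a, ha⟩ := hi
  rcases Z.eq_empty_or_nonempty with rfl | ⟨w, hw⟩
  · exact ⟨a, by simp⟩
  exact ⟨w j, fun x hx => hf.iterate q (by rw [← h x hx, ← h w hw, ha x hx, ha w hw])⟩

theorem eq_of_forall_linked (hf : Injective f) {Z : Set (Fin n → M)} {S : Set (Fin n)}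
    (hS : ∀ i, ¬ ConstCoord Z i → ∃ s ∈ S, Linked f Z i s) {x y : Fin n → M}
    (hx : x ∈ Z) (hy : y ∈ Z) (hxy : ∀ s ∈ S, x s = y s) : x = y := by
  funext i
  by_cases hi : ConstCoord Z i
  · obtain ⟨a, ha⟩ := hi
    rw [ha x hx, ha y hy]
  · obtain ⟨s, hs, p, q, h⟩ := hS i hi
    exact hf.iterate p (by rw [h x hx, h y hy, hxy s hs])

def IsRoot (f : M → M) (Z : Set (Fin n → M)) (r : Fin n) : Prop :=
  ∀ j, Linked f Z j r → ∃ k, ∀ x ∈ Z, x j = f^[k] (x r)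

theorem exists_isRoot_linked (hf : Injective f) (Z : Set (Fin n → M)) (i : Fin n) :
    ∃ r, IsRoot f Z r ∧ Linked f Z i r := by
  classical
  set S := Finset.univ.filter (Linked f Z · i)
  choose! p q hpq using fun j (hj : j ∈ S) => (Finset.mem_filter.1 hj).2
  -- a root is a coordinate of minimal depth `q - p` below `i`
  obtain ⟨r, hr, hmin⟩ :=
    S.exists_min_image (fun j => (q j : ℤ) - p j) ⟨i, by simp [S, Linked.refl]⟩
  refine ⟨r, fun j hj => ?_, (Finset.mem_filter.1 hr).2.symm⟩
  have hjS : j ∈ S := by simpa [S] using hj.trans (Finset.mem_filter.1 hr).2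
  have hdepth := hmin j hjS
  refine ⟨q j + p r - (q r + p j), fun x hx => hf.iterate (q r + p j) ?_⟩
  calc f^[q r + p j] (x j) = f^[q r] (f^[q j] (x i)) := by
        rw [iterate_add_apply, hpq j hjS x hx]
    _ = f^[q j] (f^[q r] (x i)) := by
        rw [← iterate_add_apply, ← iterate_add_apply, add_comm]
    _ = f^[q j] (f^[p r] (x r)) := by rw [hpq r hr x hx]
    _ = f^[q r + p j] (f^[q j + p r - (q r + p j)] (x r)) := by
        rw [← iterate_add_apply, ← iterate_add_apply]
        congr 1
        omega

/-- One root per class of the partition associated to `Z`, so `R.card` is the number of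
equivalence classes. -/
structure IsRootSet (f : M → M) (Z : Set (Fin n → M)) (R : Finset (Fin n)) : Prop where
  not_constCoord : ∀ r ∈ R, ¬ ConstCoord Z r
  isRoot : ∀ r ∈ R, IsRoot f Z r
  eq_of_linked : ∀ r ∈ R, ∀ s ∈ R, Linked f Z r s → r = s
  exists_linked : ∀ i, ¬ ConstCoord Z i → ∃ r ∈ R, Linked f Z i r

theorem exists_isRootSet (hf : Injective f) (Z : Set (Fin n → M)) : ∃ R, IsRootSet f Z R := by
  classical
  -- keep the least root (as an index) of each class
  refine ⟨Finset.univ.filter fun r =>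
    ¬ ConstCoord Z r ∧ IsRoot f Z r ∧ ∀ s, IsRoot f Z s → Linked f Z s r → r ≤ s,
    ⟨fun r hr => (Finset.mem_filter.1 hr).2.1, fun r hr => (Finset.mem_filter.1 hr).2.2.1,
    fun r hr s hs hrs => ?_, fun i hi => ?_⟩⟩
  · simp only [Finset.mem_filter, Finset.mem_univ, true_and] at hr hs
    exact le_antisymm (hr.2.2 s hs.2.1 hrs.symm) (hs.2.2 r hr.2.1 hrs)
  · obtain ⟨r₀, hr₀, hir₀⟩ := exists_isRoot_linked hf Z i
    obtain ⟨r, hr, hmin⟩ :=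
      (Finset.univ.filter fun s => IsRoot f Z s ∧ Linked f Z s i).exists_min_image id
        ⟨r₀, by simp [hr₀, hir₀.symm]⟩
    simp only [Finset.mem_filter, Finset.mem_univ, true_and] at hr
    refine ⟨r, ?_, hr.2.symm⟩
    simp only [Finset.mem_filter, Finset.mem_univ, true_and]
    exact ⟨fun hc => hi (hc.of_linked hf hr.2), hr.1,
      fun s hs hsr => hmin s (by simp [hs, hsr.trans hr.2])⟩

namespace IsRootSet

variable {Z Z' : Set (Fin n → M)} {R R' : Finset (Fin n)}

theorem classRep (hR : IsRootSet f Z R) (hf : Injective f) {d : ℕ} (e : Fin d ≃ R) :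
    ClassRep f Z fun a => (e a : Fin n) := by
  refine ⟨fun a => hR.not_constCoord _ (e a).2, fun a b hab hrel => hab ?_, fun i hi => ?_⟩
  · exact e.injective (Subtype.ext (hR.eq_of_linked _ (e a).2 _ (e b).2 hrel.linked))
  · obtain ⟨r, hr, hir⟩ := hR.exists_linked i hi
    exact ⟨e.symm ⟨r, hr⟩, by simpa using hir.relCoord hf⟩

theorem exists_eq_iterate (hR : IsRootSet f Z R) {i : Fin n} (hi : ¬ ConstCoord Z i) :
    ∃ r ∈ R, ∃ k, ∀ x ∈ Z, x i = f^[k] (x r) := by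
  obtain ⟨r, hr, hir⟩ := hR.exists_linked i hi
  exact ⟨r, hr, hR.isRoot r hr i hir⟩

theorem eq_of_eq_iterate (hR : IsRootSet f Z R) (hf : Injective f) (hnc : NoCycles f)
    {w : Fin n → M} (hw : w ∈ Z) {i r s : Fin n} {k l : ℕ} (hr : r ∈ R) (hs : s ∈ R)
    (hk : ∀ x ∈ Z, x i = f^[k] (x r)) (hl : ∀ x ∈ Z, x i = f^[l] (x s)) :
    r = s ∧ k = l := by
  obtain rfl : r = s := hR.eq_of_linked r hr s hs
    ((Linked.of_eq_iterate hk).symm.trans (Linked.of_eq_iterate hl))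
  exact ⟨rfl, hnc.iterate_apply_injective hf (w r) ((hk w hw).symm.trans (hl w hw))⟩

theorem injOn_restrict (hR : IsRootSet f Z R) (hf : Injective f) :
    InjOn (fun x (r : R) => x r) Z :=
  fun _ hx _ hy hxy => eq_of_forall_linked hf hR.exists_linked hx hy
    fun r hr => congrFun hxy ⟨r, hr⟩

theorem surjOn_restrict (hR : IsRootSet f Z R) (hf : Injective f) (hnc : NoCycles f)
    (hZ : IsSimple f Z) (hne : Z.Nonempty) : SurjOn (fun x (r : R) => x r) Z univ := by
  classical
  obtain ⟨w, hw⟩ := hne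
  intro v _
  choose! rt hrt k hk using fun i (hi : ¬ ConstCoord Z i) => hR.exists_eq_iterate hi
  let v' : Fin n → M := fun j => if hj : j ∈ R then v ⟨j, hj⟩ else w j
  let u : Fin n → M := fun i => if ConstCoord Z i then w i else f^[k i] (v' (rt i))
  have hu_root : ∀ r (hr : r ∈ R), u r = v ⟨r, hr⟩ := by
    intro r hr
    have hnr := hR.not_constCoord r hr
    obtain ⟨hrr, hk0⟩ := hR.eq_of_eq_iterate hf hnc hw (hrt r hnr) hr (hk r hnr)
      (l := 0) fun _ _ => rfl
    simp [u, v', hnr, hrr, hk0, hr]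
  refine ⟨u, hZ.mem_of_forall_s13 (fun i j l hij => ?_) (fun i a hi => ?_),
    funext fun r => hu_root r r.2⟩
  · by_cases hj : ConstCoord Z j
    · have hi : ConstCoord Z i := hj.of_linked hf (Linked.of_eq_iterate hij).symm
      simp only [u, if_pos hi, if_pos hj]
      exact hij w hw
    · have hi : ¬ ConstCoord Z i := fun hi => hj (hi.of_linked hf (Linked.of_eq_iterate hij))
      have hij' : ∀ x ∈ Z, x i = f^[l + k j] (x (rt j)) := fun x hx => by
        rw [iterate_add_apply, ← hk j hj x hx, hij x hx]
      obtain ⟨hr, hl⟩ := hR.eq_of_eq_iterate hf hnc hw (hrt i hi) (hrt j hj) (hk i hi) hij'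
      simp only [u, if_neg hi, if_neg hj, hr, hl, iterate_add_apply]
  · have hc : ConstCoord Z i := ⟨a, hi⟩
    simp only [u, if_pos hc]
    exact hi w hw

theorem bijOn_restrict (hR : IsRootSet f Z R) (hf : Injective f) (hnc : NoCycles f)
    (hZ : IsSimple f Z) (hne : Z.Nonempty) : BijOn (fun x (r : R) => x r) Z univ :=
  ⟨mapsTo_univ _ _, hR.injOn_restrict hf, hR.surjOn_restrict hf hnc hZ hne⟩

theorem exists_injOn_linked (hR : IsRootSet f Z R) (hR' : IsRootSet f Z' R') (h : Z ⊆ Z') :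
    ∃ ρ : Fin n → Fin n, MapsTo ρ R R' ∧ InjOn ρ R ∧
      ∀ r ∈ R, Linked f Z' r (ρ r) := by
  choose! ρ hρ hlinked using fun r (hr : r ∈ R) =>
    hR'.exists_linked r fun hc => hR.not_constCoord r hr (hc.mono_s13 h)
  refine ⟨ρ, hρ, fun r hr s hs hrs => hR.eq_of_linked r hr s hs ?_, hlinked⟩
  exact ((hlinked r hr).trans (hrs ▸ (hlinked s hs).symm)).mono_s13 h

theorem card_le (hR : IsRootSet f Z R) (hR' : IsRootSet f Z' R') (h : Z ⊆ Z') :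
    R.card ≤ R'.card :=
  let ⟨ρ, hmaps, hinj, _⟩ := hR.exists_injOn_linked hR' h
  Finset.card_le_card_of_injOn ρ hmaps hinj

theorem card_eq (hR : IsRootSet f Z R) (hR' : IsRootSet f Z R') : R.card = R'.card :=
  (hR.card_le hR' subset_rfl).antisymm (hR'.card_le hR subset_rfl)

theorem card_lt (hR : IsRootSet f Z R) (hR' : IsRootSet f Z' R') (hf : Injective f)
    (hnc : NoCycles f) (hZ : IsSimple f Z) (hne : Z.Nonempty) (h : Z ⊂ Z') :
    R.card < R'.card := by
  obtain ⟨ρ, hmaps, hinj, hlinked⟩ := hR.exists_injOn_linked hR' h.1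
  refine (Finset.card_le_card_of_injOn ρ hmaps hinj).lt_of_ne fun hcard => h.2 fun y hy => ?_
  -- with as many classes as `Z`, every class of `Z'` contains a root of `Z`,
  -- so a point of `Z'` is determined by its coordinates in `R`
  have hsurj := Finset.surjOn_of_injOn_of_card_le ρ hmaps hinj hcard.ge
  have hcover : ∀ i, ¬ ConstCoord Z' i → ∃ r ∈ (R : Set (Fin n)), Linked f Z' i r := by
    intro i hi
    obtain ⟨r', hr', hir'⟩ := hR'.exists_linked i hi
    obtain ⟨r, hr, rfl⟩ := hsurj hr'
    exact ⟨r, hr, hir'.trans (hlinked r hr).symm⟩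
  obtain ⟨x, hx, hxy⟩ := hR.surjOn_restrict hf hnc hZ hne (mem_univ (fun r : R => y r))
  rwa [eq_of_forall_linked hf hcover hy (h.1 hx) fun r hr => (congrFun hxy ⟨r, hr⟩).symm]

theorem sep_ssubset_sep (hR : IsRootSet f Z R) (hf : Injective f) (hnc : NoCycles f)
    (hZ : IsSimple f Z) {w : Fin n → M} (hw : w ∈ Z) {S T : Finset (Fin n)} (hT : T ⊆ R)
    (hST : S ⊂ T) :
    {x | x ∈ Z ∧ ∀ i ∈ T, x i = w i} ⊂ {x | x ∈ Z ∧ ∀ i ∈ S, x i = w i} := by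
  classical
  obtain ⟨r, hrT, hrS⟩ := Finset.exists_of_ssubset hST
  obtain ⟨x, hx, hxv⟩ := hR.surjOn_restrict hf hnc hZ ⟨w, hw⟩
    (mem_univ (fun s : R => if (s : Fin n) = r then f (w r) else w s))
  have hxR : ∀ s ∈ R, x s = if s = r then f (w r) else w s :=
    fun s hs => congrFun hxv (⟨s, hs⟩ : R)
  have hsub :
      {x | x ∈ Z ∧ ∀ i ∈ T, x i = w i} ⊆ {x | x ∈ Z ∧ ∀ i ∈ S, x i = w i} :=
    fun y hy => ⟨hy.1, fun i hi => hy.2 i (hST.1 hi)⟩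
  refine (Set.ssubset_iff_of_subset hsub).2 ⟨x, ⟨hx, fun i hi => ?_⟩, fun hxT => ?_⟩
  · rw [hxR i (hT (hST.1 hi)), if_neg (by rintro rfl; exact hrS hi)]
  · have hfix := hxT.2 r hrT
    rw [hxR r (hT hrT), if_pos rfl] at hfix
    exact hnc 1 one_pos _ hfix

end IsRootSet

def HasSimpleChain (f : M → M) (A : Set (Fin n → M)) (d : ℕ) : Prop :=
  ∃ Z : Fin (d+1) → Set (Fin n → M),
    StrictMono Z ∧ (∀ i, IsSimple f (Z i) ∧ (Z i).Nonempty) ∧ Z (Fin.last d) = A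

variable {A : Set (Fin n → M)} {R : Finset (Fin n)}

theorem le_card_of_hasSimpleChain (hf : Injective f) (hnc : NoCycles f) {d : ℕ}
    (hchain : HasSimpleChain f A d) (hR : IsRootSet f A R) : d ≤ R.card := by
  obtain ⟨Z, hZ, hsimple, rfl⟩ := hchain
  choose R' hR' using fun i => exists_isRootSet hf (Z i)
  have hcard : StrictMono fun i => (R' i).card := fun i j hij =>
    (hR' i).card_lt (hR' j) hf hnc (hsimple i).1 (hsimple i).2 (hZ hij)
  exact (le_apply_last_of_strictMono hcard).trans ((hR' _).card_eq hR).le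

theorem hasSimpleChain_of_le_card (hf : Injective f) (hnc : NoCycles f) (hA : IsSimple f A)
    (hne : A.Nonempty) (hR : IsRootSet f A R) {k : ℕ} (hk : k ≤ R.card) :
    HasSimpleChain f A k := by
  classical
  obtain ⟨w, hw⟩ := hne
  -- `Z t` pins the roots `e a` with `t ≤ a` to their values at `w`
  let e : Fin k ↪ Fin n :=
    (Fin.castLEOrderEmb hk).toEmbedding.trans (R.orderEmbOfFin rfl).toEmbedding
  let S : Fin (k + 1) → Finset (Fin n) := fun t =>
    (Finset.univ.filter fun a : Fin k => t.val ≤ a.val).map e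
  have hSR : ∀ t, S t ⊆ R := by
    intro t i hi
    obtain ⟨a, -, rfl⟩ := Finset.mem_map.1 hi
    exact R.orderEmbOfFin_mem rfl _
  have hS : ∀ s t, s < t → S t ⊂ S s := by
    intro s t hst
    rw [Finset.map_ssubset_map, Finset.ssubset_iff_of_subset fun a ha => by
      simp only [Finset.mem_filter, Finset.mem_univ, true_and] at ha ⊢; omega]
    exact ⟨⟨s, by omega⟩, by simp, by simpa using hst⟩
  refine ⟨fun t => {x | x ∈ A ∧ ∀ i ∈ S t, x i = w i},
    fun s t hst => hR.sep_ssubset_sep hf hnc hA hw (hSR s) (hS s t hst),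
    fun t => ⟨hA.sep_eqOn _ _, w, hw, fun _ _ => rfl⟩, ?_⟩
  ext x
  simp [S, Fin.val_last, not_le.2 (Fin.is_lt _)]

end SimpleSet

/-- Let `A ⊆ M^n` be a nonempty simple set of topological dimension `d`: there is a
chain `Z 0 ⊊ ... ⊊ Z d = A` of nonempty simple sets, but no such chain of length
`d+1`. Then `d` is the number of equivalence classes of `A`, and `A` is in bijection
with `M^d`. -/
theorem stmt_13 {M : Type} (N : ℕ) (f : M → M) (c : Fin N → M)
    (h : ModelTN N M f c) {n : ℕ} (A : Set (Fin n → M))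
    (hA : IsSimple f A) (hne : A.Nonempty) (d : ℕ)
    (hchain : ∃ Z : Fin (d+1) → Set (Fin n → M),
      StrictMono Z ∧ (∀ i, IsSimple f (Z i) ∧ (Z i).Nonempty) ∧ Z (Fin.last d) = A)
    (hmax : ¬ ∃ Z : Fin (d+2) → Set (Fin n → M),
      StrictMono Z ∧ (∀ i, IsSimple f (Z i) ∧ (Z i).Nonempty) ∧ Z (Fin.last (d+1)) = A) :
    (∃ rep : Fin d → Fin n, ClassRep f A rep) ∧
    Nonempty (↥A ≃ (Fin d → M)) := by
  obtain ⟨R, hR⟩ := SimpleSet.exists_isRootSet h.finj A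
  have hcard : R.card = d := le_antisymm
    (not_lt.1 fun hlt =>
      hmax (SimpleSet.hasSimpleChain_of_le_card h.finj h.nocycles hA hne hR hlt))
    (SimpleSet.le_card_of_hasSimpleChain h.finj h.nocycles hchain hR)
  let e : Fin d ≃ R := (finCongr hcard.symm).trans R.equivFin.symm
  have hbij := hR.bijOn_restrict h.finj h.nocycles hA hne
  exact ⟨⟨_, hR.classRep h.finj e⟩,
    ⟨(hbij.equiv _).trans ((Equiv.Set.univ _).trans (e.arrowCongr (Equiv.refl M)).symm)⟩⟩
end
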